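/- arXiv:2401.15629 — 4 statements merged into one kernel-verified Lean document; each statement's English description precedes it below -/
import Mathlib

section
/- A Banach lattice X is a KB-space (i.e., every increasing norm-bounded sequence in X₊ converges in norm) if and only if X has order continuous norm (i.e., for every downward directed set D ⊆ X₊ with infimum 0 one has inf{‖x‖ : x ∈ D} = 0) and X has the strong Nakano property. -/
/-- A Banach lattice has the **strong Nakano property** if every nonempty norm-bounded
upwards directed set `A ⊆ X₊` has an upper bound `b ∈ X₊` with `‖b‖ = sup {‖a‖ : a ∈ A}`. -/
def StrongNakano (X : Type*) [NormedAddCommGroup X] [Lattice X] [IsOrderedAddMonoid X] [HasSolidNorm X] : Prop :=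
  ∀ A : Set X, A.Nonempty → (∀ a ∈ A, 0 ≤ a) → DirectedOn (· ≤ ·) A →
    BddAbove (norm '' A) →
    ∃ b : X, 0 ≤ b ∧ b ∈ upperBounds A ∧ ‖b‖ = sSup (norm '' A)

/-- `X` is a **KB-space**: every increasing norm-bounded sequence in `X₊` converges in norm. -/
def IsKBSpace (X : Type*) [NormedAddCommGroup X] [Lattice X] [IsOrderedAddMonoid X] [HasSolidNorm X] : Prop :=
  ∀ x : ℕ → X, Monotone x → (∀ n, 0 ≤ x n) → (∃ M : ℝ, ∀ n, ‖x n‖ ≤ M) →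
    ∃ l : X, Filter.Tendsto x Filter.atTop (nhds l)

/-- `X` has **order continuous norm**: every downward directed set `D ⊆ X₊`
with infimum `0` satisfies `inf {‖x‖ : x ∈ D} = 0`. -/
def OrderContinuousNorm (X : Type*) [NormedAddCommGroup X] [Lattice X] [IsOrderedAddMonoid X] [HasSolidNorm X] : Prop :=
  ∀ D : Set X, D.Nonempty → (∀ d ∈ D, 0 ≤ d) → DirectedOn (· ≥ ·) D → IsGLB D 0 →
    sInf (norm '' D) = 0


/-!
In a KB-space a norm-bounded set `A ⊆ X₊` contains no infinite increasing chain whose steps all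
have norm `> ε`, so above some point of `A` everything in `A` is `ε`-close to it. For upwards
directed `A` this gives an increasing sequence `c` in `A` such that everything in `A` above `c k`
is `1/(k+1)`-close to `c k`; its limit is `sup A` and lies in the closure of `A`. This gives the
strong Nakano property and, after reflecting `D ∩ (-∞, d₀]` at `d₀`, order continuity of the norm.

Conversely, by strong Nakano a norm-bounded increasing sequence `x` has an upper bound, and since
Banach lattices are Archimedean, the downwards directed set `upperBounds (range x) - range x` has
infimum `0`; order continuity makes its elements arbitrarily small in norm, so `x` is Cauchy.
-/
open Set Filter Topology Pointwise

theorem directedOn_ge_upperBounds_sub {X : Type*} [AddCommGroup X] [Lattice X]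
    [IsOrderedAddMonoid X] {S : Set X} (hS : DirectedOn (· ≤ ·) S) :
    DirectedOn (· ≥ ·) (upperBounds S - S) := by
  rintro _ ⟨u, hu, s, hs, rfl⟩ _ ⟨v, hv, t, ht, rfl⟩
  obtain ⟨r, hr, hsr, htr⟩ := hS s hs t ht
  have huv : u ⊓ v ∈ upperBounds S := fun _ hw => le_inf (hu hw) (hv hw)
  exact ⟨u ⊓ v - r, ⟨u ⊓ v, huv, r, hr, rfl⟩, sub_le_sub inf_le_left hsr,
    sub_le_sub inf_le_right htr⟩

section

variable {X : Type*} [NormedAddCommGroup X] [Lattice X] [IsOrderedAddMonoid X] [HasSolidNorm X]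

theorem norm_le_norm_of_nonneg_of_le {a b : X} (ha : 0 ≤ a) (hab : a ≤ b) : ‖a‖ ≤ ‖b‖ :=
  norm_le_norm_of_abs_le_abs <| by rwa [abs_of_nonneg ha, abs_of_nonneg (ha.trans hab)]

namespace IsKBSpace

theorem exists_forall_le_norm_sub_le (hKB : IsKBSpace X) {A : Set X} (hne : A.Nonempty)
    (hpos : ∀ a ∈ A, 0 ≤ a) (hbdd : BddAbove (norm '' A)) {ε : ℝ} (hε : 0 < ε) :
    ∃ a ∈ A, ∀ b ∈ A, a ≤ b → ‖b - a‖ ≤ ε := by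
  by_contra! hjump
  choose next hnextA hle hgap using hjump
  obtain ⟨a₀, ha₀⟩ := hne
  obtain ⟨M, hM⟩ := hbdd
  let step : A → A := fun a => ⟨next a a.2, hnextA a a.2⟩
  let x : ℕ → A := fun n => step^[n] ⟨a₀, ha₀⟩
  have hx_succ (n : ℕ) : x (n + 1) = step (x n) := Function.iterate_succ_apply' ..
  have hx_mono : Monotone fun n => (x n : X) :=
    monotone_nat_of_le_succ fun n => hx_succ n ▸ hle _ (x n).2
  obtain ⟨l, hl⟩ := hKB _ hx_mono (fun n => hpos _ (x n).2)
    ⟨M, fun n => hM (mem_image_of_mem _ (x n).2)⟩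
  obtain ⟨N, hN⟩ := Metric.cauchySeq_iff'.mp hl.cauchySeq ε hε
  have hclose := hN (N + 1) N.le_succ
  rw [dist_eq_norm, hx_succ] at hclose
  exact (hgap _ (x N).2).not_gt hclose

theorem exists_isLUB_mem_closure (hKB : IsKBSpace X) {A : Set X} (hne : A.Nonempty)
    (hpos : ∀ a ∈ A, 0 ≤ a) (hdir : DirectedOn (· ≤ ·) A) (hbdd : BddAbove (norm '' A)) :
    ∃ b, IsLUB A b ∧ b ∈ closure A := by
  obtain ⟨c, hcA, hc_mono, hc_osc⟩ : ∃ c : ℕ → X, (∀ k, c k ∈ A) ∧ Monotone c ∧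
      ∀ k, ∀ a ∈ A, c k ≤ a → ‖a - c k‖ ≤ 1 / (k + 1) := by
    have hstep (a : A) (k : ℕ) :
        ∃ a' : A, (a : X) ≤ a' ∧ ∀ b ∈ A, (a' : X) ≤ b → ‖b - a'‖ ≤ 1 / (k + 1) := by
      obtain ⟨a', ⟨ha'A, haa'⟩, hosc⟩ := hKB.exists_forall_le_norm_sub_le
        (A := {b ∈ A | (a : X) ≤ b}) ⟨a, a.2, le_rfl⟩ (fun b hb => hpos b hb.1)
        (hbdd.mono (image_mono (sep_subset _ _))) Nat.one_div_pos_of_nat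
      exact ⟨⟨a', ha'A⟩, haa', fun b hb hab => hosc b ⟨hb, haa'.trans hab⟩ hab⟩
    choose next hle hosc using hstep
    obtain ⟨a₀, ha₀⟩ := hne
    obtain ⟨c, hc_zero, hc_succ⟩ : ∃ c : ℕ → A,
        c 0 = next ⟨a₀, ha₀⟩ 0 ∧ ∀ k, c (k + 1) = next (c k) (k + 1) :=
      ⟨fun k => Nat.rec (next ⟨a₀, ha₀⟩ 0) (fun k a => next a (k + 1)) k, rfl, fun _ => rfl⟩
    have hc_mono : Monotone fun k => (c k : X) :=
      monotone_nat_of_le_succ fun k => hc_succ k ▸ hle (c k) (k + 1)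
    refine ⟨fun k => c k, fun k => (c k).2, hc_mono, ?_⟩
    rintro (_ | k) <;> simp only [hc_zero, hc_succ] <;> exact hosc _ _
  obtain ⟨M, hM⟩ := hbdd
  obtain ⟨b, hb⟩ := hKB c hc_mono (fun k => hpos _ (hcA k))
    ⟨M, fun k => hM (mem_image_of_mem _ (hcA k))⟩
  refine ⟨b, ⟨fun a ha => ?_, fun u hu => le_of_tendsto' hb fun k => hu (hcA k)⟩,
    mem_closure_of_tendsto hb (Eventually.of_forall hcA)⟩
  choose d hdA hcd had using fun k => hdir (c k) (hcA k) a ha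
  have hd : Tendsto d atTop (𝓝 b) := by
    have : Tendsto (fun k => d k - c k) atTop (𝓝 0) :=
      squeeze_zero_norm (fun k => hc_osc k _ (hdA k) (hcd k))
        tendsto_one_div_add_atTop_nhds_zero_nat
    simpa using this.add hb
  exact ge_of_tendsto' hd had

theorem exists_isGLB_mem_closure (hKB : IsKBSpace X) {D : Set X} (hne : D.Nonempty)
    (hpos : ∀ d ∈ D, 0 ≤ d) (hdir : DirectedOn (· ≥ ·) D) :
    ∃ m, IsGLB D m ∧ m ∈ closure D := by
  obtain ⟨d₀, hd₀⟩ := hne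
  set A : Set X := (d₀ - ·) '' {d ∈ D | d ≤ d₀}
  have hApos : ∀ a ∈ A, 0 ≤ a := by
    rintro _ ⟨d, ⟨-, hdd₀⟩, rfl⟩
    exact sub_nonneg.mpr hdd₀
  have hAdir : DirectedOn (· ≤ ·) A := by
    rintro _ ⟨d, ⟨hd, hdd₀⟩, rfl⟩ _ ⟨e, ⟨he, -⟩, rfl⟩
    obtain ⟨f, hf, hfd, hfe⟩ := hdir d hd e he
    exact ⟨d₀ - f, ⟨f, ⟨hf, hfd.trans hdd₀⟩, rfl⟩, sub_le_sub_left hfd _, sub_le_sub_left hfe _⟩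
  have hAbdd : BddAbove (norm '' A) := by
    refine ⟨‖d₀‖, ?_⟩
    rintro _ ⟨_, ⟨d, ⟨hd, hdd₀⟩, rfl⟩, rfl⟩
    exact norm_le_norm_of_nonneg_of_le (sub_nonneg.mpr hdd₀) (sub_le_self _ (hpos d hd))
  obtain ⟨b, hb, hbA⟩ :=
    hKB.exists_isLUB_mem_closure (A := A) ⟨d₀ - d₀, d₀, ⟨hd₀, le_rfl⟩, rfl⟩ hApos hAdir hAbdd
  refine ⟨d₀ - b, ⟨fun d hd => ?_, fun l hl => ?_⟩, ?_⟩
  · obtain ⟨e, he, hed, hed₀⟩ := hdir d hd d₀ hd₀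
    exact (sub_le_comm.mp (hb.1 ⟨e, ⟨he, hed₀⟩, rfl⟩)).trans hed
  · refine le_sub_comm.mp (hb.2 ?_)
    rintro _ ⟨d, ⟨hd, -⟩, rfl⟩
    exact sub_le_sub_left (hl hd) _
  · refine map_mem_closure (continuous_sub_left d₀) hbA ?_
    rintro _ ⟨d, ⟨hd, -⟩, rfl⟩
    simpa using hd

theorem strongNakano (hKB : IsKBSpace X) : StrongNakano X := by
  intro A hne hpos hdir hbdd
  obtain ⟨b, hb, hbA⟩ := hKB.exists_isLUB_mem_closure hne hpos hdir hbdd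
  have hnorm : IsLUB (norm '' A) ‖b‖ := by
    refine isLUB_of_mem_closure ?_ (map_mem_closure continuous_norm hbA (mapsTo_image _ _))
    rintro _ ⟨a, ha, rfl⟩
    exact norm_le_norm_of_nonneg_of_le (hpos a ha) (hb.1 ha)
  obtain ⟨a₀, ha₀⟩ := hne
  exact ⟨b, (hpos a₀ ha₀).trans (hb.1 ha₀), hb.1, (hnorm.csSup_eq ⟨_, a₀, ha₀, rfl⟩).symm⟩

theorem orderContinuousNorm (hKB : IsKBSpace X) : OrderContinuousNorm X := by
  intro D hne hpos hdir hglb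
  obtain ⟨m, hm, hmD⟩ := hKB.exists_isGLB_mem_closure hne hpos hdir
  rw [hm.unique hglb] at hmD
  have hnorm : IsGLB (norm '' D) 0 := by
    refine isGLB_of_mem_closure ?_ <| by
      simpa using map_mem_closure continuous_norm hmD (mapsTo_image _ _)
    rintro _ ⟨d, -, rfl⟩
    exact norm_nonneg d
  exact hnorm.csInf_eq (hne.image _)

end IsKBSpace

variable [NormedSpace ℝ X]

theorem eq_zero_of_nonneg_of_forall_nsmul_le {y z : X} (hy : 0 ≤ y) (h : ∀ k : ℕ, k • y ≤ z) :
    y = 0 := by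
  have hk (k : ℕ) : k * ‖y‖ ≤ ‖z‖ := by
    simpa [← Nat.cast_smul_eq_nsmul ℝ, norm_smul] using
      norm_le_norm_of_nonneg_of_le (nsmul_nonneg hy k) (h k)
  by_contra hne
  obtain ⟨k, hk'⟩ := exists_nat_gt (‖z‖ / ‖y‖)
  rw [div_lt_iff₀ (norm_pos_iff.mpr hne)] at hk'
  linarith [hk k]

theorem isGLB_upperBounds_sub_zero {S : Set X} (hS : S.Nonempty) (hU : (upperBounds S).Nonempty) :
    IsGLB (upperBounds S - S) 0 := by
  refine ⟨?_, fun c hc => ?_⟩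
  · rintro _ ⟨u, hu, s, hs, rfl⟩
    exact sub_nonneg.mpr (hu hs)
  have hshift : ∀ u ∈ upperBounds S, u - c⁺ ∈ upperBounds S := fun u hu s hs => by
    have : s ≤ (u - c) ⊓ (u - 0) :=
      le_inf (le_sub_comm.mp (hc ⟨u, hu, s, hs, rfl⟩)) (by simpa using hu hs)
    rwa [← sub_sup, ← posPart_def] at this
  have hiter (k : ℕ) : ∀ u ∈ upperBounds S, u - k • c⁺ ∈ upperBounds S := by
    induction k with
    | zero => simp
    | succ k ih => simpa [succ_nsmul, sub_add_eq_sub_sub] using fun u hu => hshift _ (ih u hu)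
  obtain ⟨u, hu⟩ := hU
  obtain ⟨s, hs⟩ := hS
  have : c⁺ = 0 := eq_zero_of_nonneg_of_forall_nsmul_le (posPart_nonneg c) fun k =>
    le_sub_comm.mp (hiter k u hu hs)
  exact posPart_eq_zero.mp this

theorem OrderContinuousNorm.cauchySeq_of_monotone (hOCN : OrderContinuousNorm X) {x : ℕ → X}
    (hx : Monotone x) (hbdd : BddAbove (range x)) : CauchySeq x := by
  set D := upperBounds (range x) - range x
  have hD : D.Nonempty := hbdd.sub (range_nonempty x)
  have hglb := isGLB_upperBounds_sub_zero (range_nonempty x) hbdd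
  have hinf : sInf (norm '' D) = 0 := hOCN D hD (fun d hd => hglb.1 hd)
    (directedOn_ge_upperBounds_sub (directedOn_range.mpr hx.directed_le)) hglb
  rw [Metric.cauchySeq_iff']
  intro ε hε
  obtain ⟨_, ⟨_, ⟨u, hu, _, ⟨n, rfl⟩, rfl⟩, rfl⟩, hlt⟩ :=
    exists_lt_of_csInf_lt (hD.image _) (hinf ▸ hε)
  refine ⟨n, fun m hm => ?_⟩
  rw [dist_eq_norm]
  exact (norm_le_norm_of_nonneg_of_le (sub_nonneg.mpr (hx hm))
    (sub_le_sub_right (hu ⟨m, rfl⟩) _)).trans_lt hlt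

end

/-- **Proposition.** A Banach lattice is a KB-space iff it has order continuous norm
and the strong Nakano property. -/
theorem isKBSpace_iff_orderContinuous_and_strongNakano
    (X : Type*) [NormedAddCommGroup X] [Lattice X] [IsOrderedAddMonoid X] [HasSolidNorm X] [NormedSpace ℝ X] [CompleteSpace X] :
    IsKBSpace X ↔ OrderContinuousNorm X ∧ StrongNakano X := by
  refine ⟨fun hKB => ⟨hKB.orderContinuousNorm, hKB.strongNakano⟩, fun ⟨hOCN, hSN⟩ => ?_⟩
  intro x hx hpos ⟨M, hM⟩
  obtain ⟨b, -, hb, -⟩ := hSN (range x) (range_nonempty x) (forall_mem_range.mpr hpos)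
    (directedOn_range.mpr hx.directed_le) ⟨M, forall_mem_image.mpr (forall_mem_range.mpr hM)⟩
  exact cauchySeq_tendsto_of_complete (hOCN.cauchySeq_of_monotone hx ⟨b, hb⟩)
end

section
/- Let A be a nonempty set, 1 ≤ p < ∞, and let f : ℓ∞(A) → ℝ be nonnegative, positively homogeneous, with ‖f‖_{FBL^p} < ∞, and maximal (every nonnegative positively homogeneous g : ℓ∞(A) → ℝ with f ≤ g pointwise and ‖g‖_{FBL^p} = ‖f‖_{FBL^p} equals f). Then: (i) f(x) ≤ f(y) whenever x, y ∈ ℓ∞(A) satisfy |x(a)| ≤ |y(a)| for all a ∈ A; (ii) for all n ∈ ℕ and x_1,…,x_n ∈ ℓ∞(A) with x_k ≥ 0, one has (Σ_{k=1}^n f(x_k)^p)^{1/p} ≤ f((Σ_{k=1}^n x_k^p)^{1/p}), where the sum and p-th root inside f are taken pointwise on A; (iii) ‖f‖_{FBL^p} = sup{f(x) : x ∈ ℓ∞(A), ‖x‖_∞ ≤ 1}. -/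
open scoped ENNReal

/-- `‖f‖_{FBL^p}` for a function `f : ℓ∞(A) → ℝ` (with `ℓ∞(A)` realized as the dual of
`ℓ₁(A)`), with values in `[0,∞]`. -/
noncomputable def fblNormP (A : Type*) (p : ℝ) (f : lp (fun _ : A => ℝ) ∞ → ℝ) : ℝ≥0∞ :=
  ⨆ (m : ℕ) (x : Fin m → lp (fun _ : A => ℝ) ∞) (_ : ∀ a : A, ∑ i, |x i a| ^ p ≤ 1),
    ENNReal.ofReal ((∑ i, |f (x i)| ^ p) ^ (1 / p))


lemma le_fblNormP {A : Type*} (p : ℝ) (f : lp (fun _ : A => ℝ) ∞ → ℝ)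
    (m : ℕ) (x : Fin m → lp (fun _ : A => ℝ) ∞)
    (hx : ∀ a : A, ∑ i, |x i a| ^ p ≤ 1) :
    ENNReal.ofReal ((∑ i, |f (x i)| ^ p) ^ (1 / p)) ≤ fblNormP A p f :=
  le_iSup_of_le m <| le_iSup_of_le x <| le_iSup_of_le hx le_rfl

lemma le_fblNormP' {A : Type*} (p : ℝ) (f : lp (fun _ : A => ℝ) ∞ → ℝ)
    {ι : Type*} [Fintype ι] (x : ι → lp (fun _ : A => ℝ) ∞)
    (hx : ∀ a : A, ∑ i, |x i a| ^ p ≤ 1) :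
    ENNReal.ofReal ((∑ i, |f (x i)| ^ p) ^ (1 / p)) ≤ fblNormP A p f := by
  set e := Fintype.equivFin ι
  have h1 : ∀ a : A, ∑ i, |(x ∘ e.symm) i a| ^ p ≤ 1 := fun a => by
    simpa [Equiv.sum_comp e.symm (fun i => |x i a| ^ p)] using hx a
  have h2 := le_fblNormP p f (Fintype.card ι) (x ∘ e.symm) h1
  simpa [Equiv.sum_comp e.symm (fun i => |f (x i)| ^ p)] using h2

lemma fblNormP_mono {A : Type*} {p : ℝ} (hp : 0 ≤ p) {f g : lp (fun _ : A => ℝ) ∞ → ℝ}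
    (h : ∀ x, |f x| ≤ |g x|) : fblNormP A p f ≤ fblNormP A p g := by
  refine iSup_mono fun m => iSup_mono fun x => iSup_mono fun hx => ?_
  refine ENNReal.ofReal_le_ofReal (Real.rpow_le_rpow ?_ ?_ (by positivity))
  · positivity
  · exact Finset.sum_le_sum fun i _ => Real.rpow_le_rpow (abs_nonneg _) (h _) hp

lemma rpow_sum_mul {ι : Type*} [Fintype ι] {p c : ℝ} (hp : 0 < p) (hc : 0 ≤ c)
    {F : ι → ℝ} (hF : ∀ i, 0 ≤ F i) :
    (∑ i, (c * F i) ^ p) ^ (1 / p) = c * (∑ i, F i ^ p) ^ (1 / p) := by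
  have h1 : ∀ i ∈ Finset.univ, (c * F i) ^ p = c ^ p * F i ^ p := fun i _ =>
    Real.mul_rpow hc (hF i)
  rw [Finset.sum_congr rfl h1, ← Finset.mul_sum,
    Real.mul_rpow (Real.rpow_nonneg hc p) (Finset.sum_nonneg fun i _ => Real.rpow_nonneg (hF i) p),
    one_div, Real.rpow_rpow_inv hc hp.ne']

lemma exists_lp_infty {A : Type*} (F : A → ℝ) {B : ℝ} (hB : ∀ a, |F a| ≤ B) :
    ∃ y : lp (fun _ : A => ℝ) ∞, ∀ a, y a = F a :=
  ⟨⟨F, memℓp_infty ⟨B, by rintro r ⟨a, rfl⟩; simpa [Real.norm_eq_abs] using hB a⟩⟩, fun a => rfl⟩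

lemma abs_apply_le_norm {A : Type*} (x : lp (fun _ : A => ℝ) ∞) (a : A) : |x a| ≤ ‖x‖ := by
  have h := lp.norm_apply_le_norm ENNReal.top_ne_zero x a
  rwa [Real.norm_eq_abs] at h

set_option maxHeartbeats 2000000 in
/-- **Lemma.** Properties of a maximal nonnegative positively homogeneous function
`f : ℓ∞(A) → ℝ` of finite `FBL^p`-norm: (i) monotonicity in the pointwise absolute value;
(ii) superadditivity in `p`-th means (the pointwise `(Σ x_k^p)^{1/p}` being any element `y`
of `ℓ∞(A)` with those values); (iii) `‖f‖_{FBL^p}` is the sup of `f` on the unit ball. -/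
theorem maximal_properties_fblNormP
    (A : Type*) [Nonempty A] (p : ℝ) (hp : 1 ≤ p)
    (f : lp (fun _ : A => ℝ) ∞ → ℝ)
    (hnn : ∀ x, 0 ≤ f x)
    (hph : ∀ t : ℝ, 0 ≤ t → ∀ x, f (t • x) = t * f x)
    (hfin : fblNormP A p f ≠ ⊤)
    (hmax : ∀ g : lp (fun _ : A => ℝ) ∞ → ℝ, (∀ x, 0 ≤ g x) →
      (∀ t : ℝ, 0 ≤ t → ∀ x, g (t • x) = t * g x) →
      (∀ x, f x ≤ g x) → fblNormP A p g = fblNormP A p f → g = f) :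
    -- (i)
    (∀ x y : lp (fun _ : A => ℝ) ∞, (∀ a, |x a| ≤ |y a|) → f x ≤ f y) ∧
    -- (ii)
    (∀ (n : ℕ) (x : Fin n → lp (fun _ : A => ℝ) ∞), (∀ k a, 0 ≤ x k a) →
      ∀ y : lp (fun _ : A => ℝ) ∞, (∀ a, y a = (∑ k, x k a ^ p) ^ (1 / p)) →
        (∑ k, f (x k) ^ p) ^ (1 / p) ≤ f y) ∧
    -- (iii)
    fblNormP A p f =
      ⨆ (x : lp (fun _ : A => ℝ) ∞) (_ : ‖x‖ ≤ 1), ENNReal.ofReal (f x) := by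
  classical
  have hp0 : 0 < p := lt_of_lt_of_le one_pos hp
  set C := (fblNormP A p f).toReal with hCdef
  have hC0 : 0 ≤ C := ENNReal.toReal_nonneg
  have hofC : fblNormP A p f = ENNReal.ofReal C := (ENNReal.ofReal_toReal hfin).symm
  -- key: real form of the norm bound
  have key : ∀ {ι : Type} [Fintype ι], ∀ (x : ι → lp (fun _ : A => ℝ) ∞),
      (∀ a : A, ∑ i, |x i a| ^ p ≤ 1) → (∑ i, |f (x i)| ^ p) ^ (1 / p) ≤ C := by
    intro ι _ x hx
    have h := le_fblNormP' p f x hx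
    rw [hofC] at h
    exact (ENNReal.ofReal_le_ofReal_iff hC0).mp h
  have hf0 : f 0 = 0 := by simpa using hph 0 le_rfl 0
  -- f x ≤ C * ‖x‖
  have fb : ∀ x : lp (fun _ : A => ℝ) ∞, f x ≤ C * ‖x‖ := by
    intro x
    rcases eq_or_ne x 0 with rfl | hx0
    · rw [hf0, norm_zero, mul_zero]
    · have hn : 0 < ‖x‖ := norm_pos_iff.mpr hx0
      set z := ‖x‖⁻¹ • x with hz
      have hza : ∀ a, |z a| ≤ 1 := by
        intro a
        have : z a = ‖x‖⁻¹ * x a := by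
          rw [hz, lp.coeFn_smul, Pi.smul_apply, smul_eq_mul]
        rw [this, abs_mul, abs_of_pos (inv_pos.mpr hn)]
        rw [inv_mul_le_iff₀ hn, mul_one]
        exact abs_apply_le_norm x a
      have hcon : ∀ a : A, ∑ _i : Fin 1, |z a| ^ p ≤ 1 := by
        intro a
        rw [Fin.sum_univ_one]
        exact Real.rpow_le_one (abs_nonneg _) (hza a) hp0.le
      have h1 := key (fun _ : Fin 1 => z) hcon
      rw [Fin.sum_univ_one, one_div, Real.rpow_rpow_inv (abs_nonneg _) hp0.ne'] at h1
      have hfz : f z ≤ C := (le_abs_self _).trans h1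
      have hxz : x = ‖x‖ • z := by rw [hz, smul_inv_smul₀ hn.ne']
      calc f x = f (‖x‖ • z) := by rw [← hxz]
        _ = ‖x‖ * f z := hph ‖x‖ (norm_nonneg x) z
        _ ≤ ‖x‖ * C := mul_le_mul_of_nonneg_left hfz (norm_nonneg x)
        _ = C * ‖x‖ := mul_comm _ _
  have hsmul : ∀ (t : ℝ) (x : lp (fun _ : A => ℝ) ∞) (a : A), (t • x) a = t * x a :=
    fun t x a => by rw [lp.coeFn_smul, Pi.smul_apply, smul_eq_mul]
  -- the majorant g1
  set S1 : lp (fun _ : A => ℝ) ∞ → Set ℝ :=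
    fun y => {r | ∃ x : lp (fun _ : A => ℝ) ∞, (∀ a, |x a| ≤ |y a|) ∧ f x = r} with hS1def
  set g1 : lp (fun _ : A => ℝ) ∞ → ℝ := fun y => sSup (S1 y) with hg1def
  have hS1ne : ∀ y, f y ∈ S1 y := fun y => ⟨y, fun a => le_rfl, rfl⟩
  have hS1bdd : ∀ y, ∀ r ∈ S1 y, r ≤ C * ‖y‖ := by
    rintro y r ⟨x, hx, rfl⟩
    have hxy : ‖x‖ ≤ ‖y‖ := by
      refine lp.norm_le_of_forall_le (norm_nonneg y) fun a => ?_
      rw [Real.norm_eq_abs]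
      exact (hx a).trans (abs_apply_le_norm y a)
    exact (fb x).trans (mul_le_mul_of_nonneg_left hxy hC0)
  have hS1b : ∀ y, BddAbove (S1 y) := fun y => ⟨C * ‖y‖, hS1bdd y⟩
  have hmem_le : ∀ y x, (∀ a, |x a| ≤ |y a|) → f x ≤ g1 y :=
    fun y x hx => le_csSup (hS1b y) ⟨x, hx, rfl⟩
  have hfg1 : ∀ y, f y ≤ g1 y := fun y => hmem_le y y fun a => le_rfl
  have hg1nn : ∀ y, 0 ≤ g1 y := fun y => (hnn y).trans (hfg1 y)
  have hg1ph : ∀ t : ℝ, 0 ≤ t → ∀ y, g1 (t • y) = t * g1 y := by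
    intro t ht y
    rcases eq_or_lt_of_le ht with rfl | ht
    · rw [zero_smul, zero_mul]
      have hzero : ∀ r ∈ S1 (0 : lp (fun _ : A => ℝ) ∞), r ≤ 0 := by
        rintro r ⟨x, hx, rfl⟩
        have hx0 : x = 0 := by
          ext a
          have h := hx a
          rw [lp.coeFn_zero, Pi.zero_apply, abs_zero] at h
          simpa [lp.coeFn_zero] using abs_nonpos_iff.mp h
        rw [hx0, hf0]
      refine le_antisymm (csSup_le ⟨f 0, hS1ne 0⟩ hzero) ?_
      exact hg1nn 0
    · refine le_antisymm (csSup_le ⟨f (t • y), hS1ne _⟩ ?_) ?_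
      · rintro r ⟨x, hx, rfl⟩
        have hmem : ∀ a, |(t⁻¹ • x) a| ≤ |y a| := by
          intro a
          rw [hsmul, abs_mul, abs_of_pos (inv_pos.mpr ht), inv_mul_le_iff₀ ht]
          have h := hx a
          rwa [hsmul, abs_mul, abs_of_pos ht] at h
        have hxe : f x = t * f (t⁻¹ • x) := by
          rw [← hph t ht.le, smul_inv_smul₀ ht.ne']
        rw [hxe]
        exact mul_le_mul_of_nonneg_left (hmem_le y _ hmem) ht.le
      · have h2 : g1 y ≤ t⁻¹ * g1 (t • y) := by
          refine csSup_le ⟨f y, hS1ne y⟩ ?_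
          rintro r ⟨x, hx, rfl⟩
          have hmem : ∀ a, |(t • x) a| ≤ |(t • y) a| := by
            intro a; rw [hsmul, hsmul, abs_mul, abs_mul]
            exact mul_le_mul_of_nonneg_left (hx a) (abs_nonneg t)
          have h3 := hmem_le (t • y) (t • x) hmem
          rw [hph t ht.le] at h3
          calc f x = t⁻¹ * (t * f x) := by rw [← mul_assoc, inv_mul_cancel₀ ht.ne', one_mul]
            _ ≤ t⁻¹ * g1 (t • y) := mul_le_mul_of_nonneg_left h3 (inv_nonneg.mpr ht.le)
        calc t * g1 y ≤ t * (t⁻¹ * g1 (t • y)) := mul_le_mul_of_nonneg_left h2 ht.le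
          _ = g1 (t • y) := by rw [← mul_assoc, mul_inv_cancel₀ ht.ne', one_mul]
  have hg1norm : fblNormP A p g1 = fblNormP A p f := by
    refine le_antisymm ?_ (fblNormP_mono hp0.le fun x => by
      rw [abs_of_nonneg (hnn x), abs_of_nonneg (hg1nn x)]; exact hfg1 x)
    rw [hofC]
    refine iSup_le fun m => iSup_le fun x => iSup_le fun hx => ?_
    have hreal : (∑ i, |g1 (x i)| ^ p) ^ (1 / p) ≤ C := by
      refine le_of_forall_pos_le_add fun ε hε => ?_
      set K := ((m : ℝ)) ^ (1 / p) with hK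
      have hK0 : 0 ≤ K := Real.rpow_nonneg (Nat.cast_nonneg m) _
      set δ := ε / (K + 1) with hδ
      have hδ0 : 0 < δ := div_pos hε (by linarith)
      have hchoice : ∀ i, ∃ x' : lp (fun _ : A => ℝ) ∞,
          (∀ a, |x' a| ≤ |x i a|) ∧ g1 (x i) ≤ f x' + δ := by
        intro i
        obtain ⟨r, ⟨x', hx', rfl⟩, hr⟩ :=
          exists_lt_of_lt_csSup ⟨f (x i), hS1ne (x i)⟩
            (show g1 (x i) - δ < g1 (x i) by linarith)
        exact ⟨x', hx', by linarith⟩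
      choose x' hx'dom hx'cl using hchoice
      have hadm : ∀ a : A, ∑ i, |x' i a| ^ p ≤ 1 := fun a =>
        le_trans (Finset.sum_le_sum fun i _ =>
          Real.rpow_le_rpow (abs_nonneg _) (hx'dom i a) hp0.le) (hx a)
      have h1 : (∑ i, |g1 (x i)| ^ p) ^ (1 / p)
          ≤ (∑ i, |f (x' i) + δ| ^ p) ^ (1 / p) := by
        refine Real.rpow_le_rpow (by positivity) (Finset.sum_le_sum fun i _ => ?_) (by positivity)
        rw [abs_of_nonneg (hg1nn _)]
        refine Real.rpow_le_rpow (hg1nn _) ((hx'cl i).trans (le_abs_self _)) hp0.le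
      have h2 := Real.Lp_add_le Finset.univ (fun i => f (x' i)) (fun _ : Fin m => δ) hp
      have h3 : (∑ i, |f (x' i)| ^ p) ^ (1 / p) ≤ C := key x' hadm
      have h4 : (∑ _i : Fin m, |δ| ^ p) ^ (1 / p) = K * δ := by
        rw [Finset.sum_const, Finset.card_univ, Fintype.card_fin, nsmul_eq_mul,
          abs_of_pos hδ0,
          Real.mul_rpow (Nat.cast_nonneg m) (Real.rpow_nonneg hδ0.le p), one_div,
          Real.rpow_rpow_inv hδ0.le hp0.ne', hK, one_div]
      have h5 : (∑ i, |f (x' i) + δ| ^ p) ^ (1 / p) ≤ C + K * δ := by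
        calc (∑ i, |f (x' i) + δ| ^ p) ^ (1 / p)
            ≤ (∑ i, |f (x' i)| ^ p) ^ (1 / p) + (∑ _i : Fin m, |δ| ^ p) ^ (1 / p) := h2
          _ ≤ C + K * δ := by rw [h4]; exact add_le_add_left h3 _
      have h6 : K * δ ≤ ε := by
        have hKε : δ * (K + 1) = ε := div_mul_cancel₀ ε (by linarith)
        nlinarith
      linarith [h1.trans h5]
    exact le_trans (ENNReal.ofReal_le_ofReal hreal) le_rfl
  have hg1f : g1 = f := hmax g1 hg1nn hg1ph hfg1 hg1norm
  have hi : ∀ x y : lp (fun _ : A => ℝ) ∞, (∀ a, |x a| ≤ |y a|) → f x ≤ f y := by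
    intro x y hxy
    calc f x ≤ g1 y := hmem_le y x hxy
      _ = f y := by rw [hg1f]
  -- abs elements
  have habsE : ∀ y : lp (fun _ : A => ℝ) ∞, ∃ Y : lp (fun _ : A => ℝ) ∞,
      ∀ a, Y a = |y a| := fun y =>
    exists_lp_infty (fun a => |y a|) (fun a => by rw [abs_abs]; exact abs_apply_le_norm y a)
  -- scaling of values
  have hval : ∀ (t : ℝ), 0 ≤ t → ∀ (n : ℕ) (z : Fin n → lp (fun _ : A => ℝ) ∞),
      (∑ k, f (t • z k) ^ p) ^ (1 / p) = t * (∑ k, f (z k) ^ p) ^ (1 / p) := by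
    intro t ht n z
    have h : ∀ k ∈ Finset.univ, f (t • z k) ^ p = (t * f (z k)) ^ p := fun k _ => by
      rw [hph t ht]
    rw [Finset.sum_congr rfl h, rpow_sum_mul hp0 ht (fun k => hnn (z k))]
  -- part (ii) majorant
  set S2 : lp (fun _ : A => ℝ) ∞ → Set ℝ := fun y =>
    {r | ∃ (n : ℕ) (z : Fin n → lp (fun _ : A => ℝ) ∞), (∀ k a, 0 ≤ z k a) ∧
      (∀ a, ∑ k, (z k a) ^ p ≤ |y a| ^ p) ∧ (∑ k, f (z k) ^ p) ^ (1 / p) = r} with hS2def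
  set g2 : lp (fun _ : A => ℝ) ∞ → ℝ := fun y => sSup (S2 y) with hg2def
  have hS2z : ∀ y, (0 : ℝ) ∈ S2 y := by
    intro y
    refine ⟨0, Fin.elim0, fun k => k.elim0, fun a => ?_, ?_⟩
    · simp only [Finset.univ_eq_empty, Finset.sum_empty]
      exact Real.rpow_nonneg (abs_nonneg _) p
    · simp only [Finset.univ_eq_empty, Finset.sum_empty]
      exact Real.zero_rpow (one_div_ne_zero hp0.ne')
  -- if the pointwise budget is zero then the value is zero
  have hzval : ∀ (y : lp (fun _ : A => ℝ) ∞), (∀ a, |y a| ^ p ≤ 0) →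
      ∀ r ∈ S2 y, r = 0 := by
    rintro y hy r ⟨n, z, hznn, hzle, rfl⟩
    have hz0 : ∀ k, f (z k) = 0 := by
      intro k
      have hzk : z k = 0 := by
        ext a
        have h1 : (z k a) ^ p ≤ 0 := by
          have hs := Finset.single_le_sum (f := fun j => (z j) a ^ p)
            (fun j _ => Real.rpow_nonneg (hznn j a) p) (Finset.mem_univ k)
          exact hs.trans ((hzle a).trans (hy a))
        by_contra hne
        have hpos : 0 < z k a := lt_of_le_of_ne (hznn k a) (by
          intro h; exact hne (by rw [lp.coeFn_zero, Pi.zero_apply, ← h]))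
        exact absurd h1 (not_le.mpr (Real.rpow_pos_of_pos hpos p))
      rw [hzk, hf0]
    rw [Finset.sum_eq_zero fun k _ => by rw [hz0 k, Real.zero_rpow hp0.ne'],
      Real.zero_rpow (one_div_ne_zero hp0.ne')]
  have hS2bdd : ∀ y, ∀ r ∈ S2 y, r ≤ C * ‖y‖ := by
    rintro y r hr
    rcases eq_or_lt_of_le (norm_nonneg y) with hy0 | hy0
    · have hzy : ∀ a, |y a| ^ p ≤ 0 := by
        intro a
        have hya : |y a| = 0 :=
          le_antisymm ((abs_apply_le_norm y a).trans hy0.symm.le) (abs_nonneg _)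
        rw [hya, Real.zero_rpow hp0.ne']
      rw [hzval y hzy r hr, ← hy0, mul_zero]
    · obtain ⟨n, z, hznn, hzle, rfl⟩ := hr
      set w : Fin n → lp (fun _ : A => ℝ) ∞ := fun k => ‖y‖⁻¹ • z k with hw
      have hinv : 0 ≤ ‖y‖⁻¹ := inv_nonneg.mpr hy0.le
      have hadm : ∀ a : A, ∑ k, |w k a| ^ p ≤ 1 := by
        intro a
        have h1 : ∀ k ∈ Finset.univ, |w k a| ^ p = ‖y‖⁻¹ ^ p * (z k a) ^ p := by
          intro k _
          rw [hw, hsmul, abs_of_nonneg (mul_nonneg hinv (hznn k a)),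
            Real.mul_rpow hinv (hznn k a)]
        calc ∑ k, |w k a| ^ p = ∑ k, ‖y‖⁻¹ ^ p * (z k a) ^ p := Finset.sum_congr rfl h1
          _ = ‖y‖⁻¹ ^ p * ∑ k, (z k a) ^ p := (Finset.mul_sum _ _ _).symm
          _ ≤ ‖y‖⁻¹ ^ p * |y a| ^ p :=
              mul_le_mul_of_nonneg_left (hzle a) (Real.rpow_nonneg hinv p)
          _ = (‖y‖⁻¹ * |y a|) ^ p := (Real.mul_rpow hinv (abs_nonneg _)).symm
          _ ≤ 1 := Real.rpow_le_one (mul_nonneg hinv (abs_nonneg _))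
              (by rw [inv_mul_le_iff₀ hy0, mul_one]; exact abs_apply_le_norm y a) hp0.le
      have hk := key w hadm
      have heq : (∑ k, |f (w k)| ^ p) ^ (1 / p)
          = ‖y‖⁻¹ * (∑ k, f (z k) ^ p) ^ (1 / p) := by
        have h2 : ∀ k ∈ Finset.univ, |f (w k)| ^ p = f (w k) ^ p := fun k _ => by
          rw [abs_of_nonneg (hnn _)]
        rw [Finset.sum_congr rfl h2, hw]
        exact hval ‖y‖⁻¹ hinv n z
      rw [heq, inv_mul_le_iff₀ hy0] at hk
      rw [mul_comm]
      exact hk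
  have hS2b : ∀ y, BddAbove (S2 y) := fun y => ⟨C * ‖y‖, hS2bdd y⟩
  have hmem2 : ∀ y (n : ℕ) (z : Fin n → lp (fun _ : A => ℝ) ∞), (∀ k a, 0 ≤ z k a) →
      (∀ a, ∑ k, (z k a) ^ p ≤ |y a| ^ p) → (∑ k, f (z k) ^ p) ^ (1 / p) ≤ g2 y :=
    fun y n z h1 h2 => le_csSup (hS2b y) ⟨n, z, h1, h2, rfl⟩
  have hfg2 : ∀ y, f y ≤ g2 y := by
    intro y
    obtain ⟨Y, hY⟩ := habsE y
    have h1 : f y ≤ f Y := hi y Y fun a => by rw [hY, abs_abs]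
    have h2 : f Y ≤ g2 y := by
      have h3 := hmem2 y 1 (fun _ => Y) (fun k a => by rw [hY]; exact abs_nonneg _)
        (fun a => by rw [Fin.sum_univ_one, hY])
      rwa [Fin.sum_univ_one, one_div, Real.rpow_rpow_inv (hnn Y) hp0.ne'] at h3
    exact h1.trans h2
  have hg2nn : ∀ y, 0 ≤ g2 y := fun y => (hnn y).trans (hfg2 y)
  have hg2ph : ∀ t : ℝ, 0 ≤ t → ∀ y, g2 (t • y) = t * g2 y := by
    intro t ht y
    rcases eq_or_lt_of_le ht with rfl | ht
    · rw [zero_smul, zero_mul]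
      have hzy : ∀ a, |(0 : lp (fun _ : A => ℝ) ∞) a| ^ p ≤ 0 := by
        intro a
        rw [lp.coeFn_zero, Pi.zero_apply, abs_zero, Real.zero_rpow hp0.ne']
      refine le_antisymm (csSup_le ⟨0, hS2z 0⟩ fun r hr => (hzval 0 hzy r hr).le) (hg2nn 0)
    · have habs_smul : ∀ a, |(t • y) a| ^ p = t ^ p * |y a| ^ p := by
        intro a
        rw [hsmul, abs_mul, abs_of_pos ht, Real.mul_rpow ht.le (abs_nonneg _)]
      refine le_antisymm (csSup_le ⟨0, hS2z _⟩ ?_) ?_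
      · rintro r ⟨n, z, hznn, hzle, rfl⟩
        have hznn' : ∀ k a, 0 ≤ (t⁻¹ • z k) a := fun k a => by
          rw [hsmul]; exact mul_nonneg (inv_nonneg.mpr ht.le) (hznn k a)
        have hzle' : ∀ a, ∑ k, ((t⁻¹ • z k) a) ^ p ≤ |y a| ^ p := by
          intro a
          have h1 : ∀ k ∈ Finset.univ, ((t⁻¹ • z k) a) ^ p = t⁻¹ ^ p * (z k a) ^ p :=
            fun k _ => by rw [hsmul, Real.mul_rpow (inv_nonneg.mpr ht.le) (hznn k a)]
          calc ∑ k, ((t⁻¹ • z k) a) ^ p = t⁻¹ ^ p * ∑ k, (z k a) ^ p := by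
                rw [Finset.sum_congr rfl h1, ← Finset.mul_sum]
            _ ≤ t⁻¹ ^ p * (t ^ p * |y a| ^ p) := by
                refine mul_le_mul_of_nonneg_left ?_ (Real.rpow_nonneg (inv_nonneg.mpr ht.le) p)
                rw [← habs_smul a]; exact hzle a
            _ = |y a| ^ p := by
                rw [← mul_assoc, ← Real.mul_rpow (inv_nonneg.mpr ht.le) ht.le,
                  inv_mul_cancel₀ ht.ne', Real.one_rpow, one_mul]
        have h2 := hmem2 y n (fun k => t⁻¹ • z k) hznn' hzle'
        rw [hval t⁻¹ (inv_nonneg.mpr ht.le) n z] at h2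
        calc (∑ k, f (z k) ^ p) ^ (1 / p)
            = t * (t⁻¹ * (∑ k, f (z k) ^ p) ^ (1 / p)) := by
              rw [← mul_assoc, mul_inv_cancel₀ ht.ne', one_mul]
          _ ≤ t * g2 y := mul_le_mul_of_nonneg_left h2 ht.le
      · have h2 : g2 y ≤ t⁻¹ * g2 (t • y) := by
          refine csSup_le ⟨0, hS2z y⟩ ?_
          rintro r ⟨n, z, hznn, hzle, rfl⟩
          have hznn' : ∀ k a, 0 ≤ (t • z k) a := fun k a => by
            rw [hsmul]; exact mul_nonneg ht.le (hznn k a)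
          have hzle' : ∀ a, ∑ k, ((t • z k) a) ^ p ≤ |(t • y) a| ^ p := by
            intro a
            have h1 : ∀ k ∈ Finset.univ, ((t • z k) a) ^ p = t ^ p * (z k a) ^ p :=
              fun k _ => by rw [hsmul, Real.mul_rpow ht.le (hznn k a)]
            rw [Finset.sum_congr rfl h1, ← Finset.mul_sum, habs_smul a]
            exact mul_le_mul_of_nonneg_left (hzle a) (Real.rpow_nonneg ht.le p)
          have h3 := hmem2 (t • y) n (fun k => t • z k) hznn' hzle'
          rw [hval t ht.le n z] at h3
          calc (∑ k, f (z k) ^ p) ^ (1 / p)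
              = t⁻¹ * (t * (∑ k, f (z k) ^ p) ^ (1 / p)) := by
                rw [← mul_assoc, inv_mul_cancel₀ ht.ne', one_mul]
            _ ≤ t⁻¹ * g2 (t • y) := mul_le_mul_of_nonneg_left h3 (inv_nonneg.mpr ht.le)
        calc t * g2 y ≤ t * (t⁻¹ * g2 (t • y)) := mul_le_mul_of_nonneg_left h2 ht.le
          _ = g2 (t • y) := by rw [← mul_assoc, mul_inv_cancel₀ ht.ne', one_mul]
  have hg2norm : fblNormP A p g2 = fblNormP A p f := by
    refine le_antisymm ?_ (fblNormP_mono hp0.le fun x => by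
      rw [abs_of_nonneg (hnn x), abs_of_nonneg (hg2nn x)]; exact hfg2 x)
    rw [hofC]
    refine iSup_le fun m => iSup_le fun x => iSup_le fun hx => ?_
    have hreal : (∑ i, |g2 (x i)| ^ p) ^ (1 / p) ≤ C := by
      refine le_of_forall_pos_le_add fun ε hε => ?_
      set K := ((m : ℝ)) ^ (1 / p) with hK
      have hK0 : 0 ≤ K := Real.rpow_nonneg (Nat.cast_nonneg m) _
      set δ := ε / (K + 1) with hδ
      have hδ0 : 0 < δ := div_pos hε (by linarith)
      have hchoice : ∀ i, ∃ (n : ℕ) (z : Fin n → lp (fun _ : A => ℝ) ∞),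
          (∀ k a, 0 ≤ z k a) ∧ (∀ a, ∑ k, (z k a) ^ p ≤ |x i a| ^ p) ∧
          g2 (x i) ≤ (∑ k, f (z k) ^ p) ^ (1 / p) + δ := by
        intro i
        obtain ⟨r, ⟨n, z, h1, h2, rfl⟩, hr⟩ :=
          exists_lt_of_lt_csSup ⟨0, hS2z (x i)⟩
            (show g2 (x i) - δ < g2 (x i) by linarith)
        exact ⟨n, z, h1, h2, by linarith⟩
      choose n z hznn hzle hcl using hchoice
      set V : Fin m → ℝ := fun i => (∑ k, f (z i k) ^ p) ^ (1 / p) with hV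
      have hV0 : ∀ i, 0 ≤ V i := fun i =>
        Real.rpow_nonneg (Finset.sum_nonneg fun k _ => Real.rpow_nonneg (hnn _) p) _
      set Z : ((i : Fin m) × Fin (n i)) → lp (fun _ : A => ℝ) ∞ := fun σ => z σ.1 σ.2 with hZ
      have hadm : ∀ a : A, ∑ σ, |Z σ a| ^ p ≤ 1 := by
        intro a
        rw [← Finset.univ_sigma_univ, Finset.sum_sigma]
        refine le_trans (Finset.sum_le_sum fun i _ => ?_) (hx a)
        have h1 : ∀ k ∈ Finset.univ, |z i k a| ^ p = (z i k a) ^ p := fun k _ => by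
          rw [abs_of_nonneg (hznn i k a)]
        rw [Finset.sum_congr rfl h1]
        exact hzle i a
      have hkey := key Z hadm
      have hVsum : ∑ i, V i ^ p = ∑ σ : ((i : Fin m) × Fin (n i)), |f (Z σ)| ^ p := by
        rw [← Finset.univ_sigma_univ, Finset.sum_sigma]
        refine Finset.sum_congr rfl fun i _ => ?_
        rw [hV, one_div, Real.rpow_inv_rpow (Finset.sum_nonneg fun k _ =>
          Real.rpow_nonneg (hnn _) p) hp0.ne']
        exact Finset.sum_congr rfl fun k _ => by rw [abs_of_nonneg (hnn _)]
      have h1 : (∑ i, |g2 (x i)| ^ p) ^ (1 / p)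
          ≤ (∑ i, |V i + δ| ^ p) ^ (1 / p) := by
        refine Real.rpow_le_rpow (by positivity) (Finset.sum_le_sum fun i _ => ?_) (by positivity)
        rw [abs_of_nonneg (hg2nn _)]
        exact Real.rpow_le_rpow (hg2nn _) ((hcl i).trans (le_abs_self _)) hp0.le
      have h2 := Real.Lp_add_le Finset.univ V (fun _ : Fin m => δ) hp
      have h3 : (∑ i, |V i| ^ p) ^ (1 / p) ≤ C := by
        have : ∑ i, |V i| ^ p = ∑ i, V i ^ p := Finset.sum_congr rfl fun i _ => by
          rw [abs_of_nonneg (hV0 i)]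
        rw [this, hVsum]
        exact hkey
      have h4 : (∑ _i : Fin m, |δ| ^ p) ^ (1 / p) = K * δ := by
        rw [Finset.sum_const, Finset.card_univ, Fintype.card_fin, nsmul_eq_mul,
          abs_of_pos hδ0,
          Real.mul_rpow (Nat.cast_nonneg m) (Real.rpow_nonneg hδ0.le p), one_div,
          Real.rpow_rpow_inv hδ0.le hp0.ne', hK, one_div]
      have h5 : (∑ i, |V i + δ| ^ p) ^ (1 / p) ≤ C + K * δ := by
        calc (∑ i, |V i + δ| ^ p) ^ (1 / p)
            ≤ (∑ i, |V i| ^ p) ^ (1 / p) + (∑ _i : Fin m, |δ| ^ p) ^ (1 / p) := h2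
          _ ≤ C + K * δ := by rw [h4]; exact add_le_add_left h3 _
      have h6 : K * δ ≤ ε := by
        have hKε : δ * (K + 1) = ε := div_mul_cancel₀ ε (by linarith)
        nlinarith
      linarith [h1.trans h5]
    exact ENNReal.ofReal_le_ofReal hreal
  have hg2f : g2 = f := hmax g2 hg2nn hg2ph hfg2 hg2norm
  have hii : ∀ (n : ℕ) (x : Fin n → lp (fun _ : A => ℝ) ∞), (∀ k a, 0 ≤ x k a) →
      ∀ y : lp (fun _ : A => ℝ) ∞, (∀ a, y a = (∑ k, x k a ^ p) ^ (1 / p)) →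
        (∑ k, f (x k) ^ p) ^ (1 / p) ≤ f y := by
    intro n x hxnn y hy
    have hsum_nn : ∀ a, 0 ≤ ∑ k, x k a ^ p :=
      fun a => Finset.sum_nonneg fun k _ => Real.rpow_nonneg (hxnn k a) p
    have hyle : ∀ a, ∑ k, (x k a) ^ p ≤ |y a| ^ p := by
      intro a
      have hy0 : 0 ≤ y a := by rw [hy a]; exact Real.rpow_nonneg (hsum_nn a) _
      rw [abs_of_nonneg hy0, hy a, one_div,
        Real.rpow_inv_rpow (hsum_nn a) hp0.ne']
    have := hmem2 y n x hxnn hyle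
    rwa [hg2f] at this
  refine ⟨hi, hii, ?_⟩
  -- part (iii)
  refine le_antisymm ?_ ?_
  · refine iSup_le fun m => iSup_le fun x => iSup_le fun hx => ?_
    obtain ⟨y, hy⟩ : ∃ y : lp (fun _ : A => ℝ) ∞,
        ∀ a, y a = (∑ i, |x i a| ^ p) ^ (1 / p) := by
      refine exists_lp_infty _ (B := 1) fun a => ?_
      rw [abs_of_nonneg (Real.rpow_nonneg (Finset.sum_nonneg fun i _ =>
        Real.rpow_nonneg (abs_nonneg _) p) _)]
      exact Real.rpow_le_one (Finset.sum_nonneg fun i _ =>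
        Real.rpow_nonneg (abs_nonneg _) p) (hx a) (by positivity)
    have hy1 : ‖y‖ ≤ 1 := by
      refine lp.norm_le_of_forall_le zero_le_one fun a => ?_
      rw [Real.norm_eq_abs, hy a, abs_of_nonneg (Real.rpow_nonneg (Finset.sum_nonneg
        fun i _ => Real.rpow_nonneg (abs_nonneg _) p) _)]
      exact Real.rpow_le_one (Finset.sum_nonneg fun i _ =>
        Real.rpow_nonneg (abs_nonneg _) p) (hx a) (by positivity)
    have hX' : ∀ i, ∃ X : lp (fun _ : A => ℝ) ∞, ∀ a, X a = |x i a| :=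
      fun i => habsE (x i)
    choose X' hX'eq using hX'
    have hfle : ∀ i, |f (x i)| ≤ f (X' i) := by
      intro i
      rw [abs_of_nonneg (hnn _)]
      exact hi (x i) (X' i) fun a => by rw [hX'eq, abs_abs]
    have hterm : (∑ i, |f (x i)| ^ p) ^ (1 / p) ≤ f y := by
      have h1 : (∑ i, |f (x i)| ^ p) ^ (1 / p) ≤ (∑ i, f (X' i) ^ p) ^ (1 / p) := by
        refine Real.rpow_le_rpow (by positivity) (Finset.sum_le_sum fun i _ => ?_)
          (by positivity)
        exact Real.rpow_le_rpow (abs_nonneg _) (hfle i) hp0.le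
      refine h1.trans (hii m X' (fun k a => by rw [hX'eq]; exact abs_nonneg _) y fun a => ?_)
      rw [hy a]
      exact congrArg (· ^ (1 / p)) (Finset.sum_congr rfl fun i _ => by rw [hX'eq])
    calc ENNReal.ofReal ((∑ i, |f (x i)| ^ p) ^ (1 / p))
        ≤ ENNReal.ofReal (f y) := ENNReal.ofReal_le_ofReal hterm
      _ ≤ ⨆ (x : lp (fun _ : A => ℝ) ∞) (_ : ‖x‖ ≤ 1), ENNReal.ofReal (f x) :=
        le_iSup_of_le y (le_iSup_of_le hy1 le_rfl)
  · refine iSup_le fun x0 => iSup_le fun hx1 => ?_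
    have hcon : ∀ a : A, ∑ _i : Fin 1, |x0 a| ^ p ≤ 1 := by
      intro a
      rw [Fin.sum_univ_one]
      exact Real.rpow_le_one (abs_nonneg _) ((abs_apply_le_norm x0 a).trans hx1) hp0.le
    have h := le_fblNormP p f 1 (fun _ => x0) hcon
    rwa [Fin.sum_univ_one, one_div, Real.rpow_rpow_inv (abs_nonneg _) hp0.ne',
      abs_of_nonneg (hnn x0)] at h
end

section
/- Let A be a nonempty set, 1 ≤ p < ∞, and let φ : ℓ∞(A) → ℝ be a bounded linear functional. Define g_φ : ℓ∞(A) → ℝ by g_φ(x) := |φ(|x|^p)|^{1/p}, where |x|^p ∈ ℓ∞(A) is the function a ↦ |x(a)|^p. Then g_φ is nonnegative, positively homogeneous, and ‖g_φ‖_{FBL^p} = sup{ |φ(x)|^{1/p} : x ∈ ℓ∞(A), ‖x‖_∞ ≤ 1 } = ‖φ‖^{1/p}. -/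
open scoped ENNReal

/-- The pointwise `p`-th power of the absolute value, `|x|^p`, as an element of `ℓ∞(A)`. -/
noncomputable def absRpow {A : Type*} (p : ℝ) (hp : 0 ≤ p)
    (x : lp (fun _ : A => ℝ) ∞) : lp (fun _ : A => ℝ) ∞ :=
  ⟨fun a => |x a| ^ p, by
    apply memℓp_infty
    refine ⟨‖x‖ ^ p, ?_⟩
    rintro r ⟨a, rfl⟩
    have h1 : |x a| ≤ ‖x‖ := by
      have := lp.norm_apply_le_norm (p := ∞) (by norm_num) x a
      rwa [Real.norm_eq_abs] at this
    have h2 := Real.rpow_le_rpow (abs_nonneg (x a)) h1 hp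
    calc ‖|x a| ^ p‖ = |x a| ^ p := by
            rw [Real.norm_eq_abs, abs_of_nonneg (Real.rpow_nonneg (abs_nonneg (x a)) p)]
      _ ≤ ‖x‖ ^ p := h2⟩

/-- The function `g_φ(x) = |φ(|x|^p)|^{1/p}` associated with a bounded linear functional
`φ` on `ℓ∞(A)`. -/
noncomputable def gPhi {A : Type*} (p : ℝ) (hp : 0 ≤ p)
    (φ : lp (fun _ : A => ℝ) ∞ →L[ℝ] ℝ) (x : lp (fun _ : A => ℝ) ∞) : ℝ :=
  |φ (absRpow p hp x)| ^ (1 / p)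

lemma absRpow_apply {A : Type*} (p : ℝ) (hp : 0 ≤ p) (x : lp (fun _ : A => ℝ) ∞) (a : A) :
    absRpow p hp x a = |x a| ^ p := rfl

/-- An element of `ℓ∞(A)` from a bounded function. -/
noncomputable def mkLinf {A : Type*} (f : A → ℝ) (C : ℝ) (h : ∀ a, |f a| ≤ C) :
    lp (fun _ : A => ℝ) ∞ :=
  ⟨f, memℓp_infty ⟨C, by rintro r ⟨a, rfl⟩; simpa using h a⟩⟩

lemma mkLinf_apply {A : Type*} (f : A → ℝ) (C : ℝ) (h : ∀ a, |f a| ≤ C) (a : A) :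
    mkLinf f C h a = f a := rfl

set_option synthInstance.maxHeartbeats 1000000
set_option maxHeartbeats 2000000

/-- **Lemma.** For every bounded linear functional `φ` on `ℓ∞(A)`, the function
`g_φ(x) = |φ(|x|^p)|^{1/p}` is nonnegative, positively homogeneous, and
`‖g_φ‖_{FBL^p} = sup {|φ(x)|^{1/p} : ‖x‖_∞ ≤ 1} = ‖φ‖^{1/p}`. -/
theorem gPhi_nonneg_posHomog_norm
    (A : Type*) [Nonempty A] (p : ℝ) (hp : 1 ≤ p)
    (φ : lp (fun _ : A => ℝ) ∞ →L[ℝ] ℝ) :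
    (∀ x, 0 ≤ gPhi p (zero_le_one.trans hp) φ x) ∧
    (∀ t : ℝ, 0 ≤ t → ∀ x, gPhi p (zero_le_one.trans hp) φ (t • x) =
      t * gPhi p (zero_le_one.trans hp) φ x) ∧
    fblNormP A p (gPhi p (zero_le_one.trans hp) φ) =
      (⨆ (x : lp (fun _ : A => ℝ) ∞) (_ : ‖x‖ ≤ 1), ENNReal.ofReal (|φ x| ^ (1 / p))) ∧
    (⨆ (x : lp (fun _ : A => ℝ) ∞) (_ : ‖x‖ ≤ 1), ENNReal.ofReal (|φ x| ^ (1 / p))) =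
      ENNReal.ofReal (‖φ‖ ^ (1 / p)) := by
  have hp0 : (0:ℝ) < p := lt_of_lt_of_le one_pos hp
  have hp' : p ≠ 0 := hp0.ne'
  have hpn : (0:ℝ) ≤ p := zero_le_one.trans hp
  have hq : (0:ℝ) ≤ 1/p := by positivity
  -- nonnegativity
  have hnn : ∀ x, 0 ≤ gPhi p hpn φ x := fun x => Real.rpow_nonneg (abs_nonneg _) _
  -- `|g(x)|^p = |φ(|x|^p)|`
  have hgp : ∀ x, |gPhi p hpn φ x| ^ p = |φ (absRpow p hpn x)| := by
    intro x
    rw [abs_of_nonneg (hnn x)]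
    unfold gPhi
    rw [one_div, Real.rpow_inv_rpow (abs_nonneg _) hp']
  -- positive homogeneity
  have habs : ∀ (t : ℝ), 0 ≤ t → ∀ x : lp (fun _ : A => ℝ) ∞,
      absRpow p hpn (t • x) = (t ^ p) • absRpow p hpn x := by
    intro t ht x
    apply lp.ext
    funext a
    simp only [lp.coeFn_smul, Pi.smul_apply, smul_eq_mul]
    show |(t • x) a| ^ p = t ^ p * |x a| ^ p
    rw [lp.coeFn_smul, Pi.smul_apply, smul_eq_mul, abs_mul, abs_of_nonneg ht,
      Real.mul_rpow ht (abs_nonneg _)]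
  have hhom : ∀ t : ℝ, 0 ≤ t → ∀ x : lp (fun _ : A => ℝ) ∞,
      gPhi p hpn φ (t • x) = t * gPhi p hpn φ x := by
    intro t ht x
    unfold gPhi
    rw [habs t ht x, map_smul, smul_eq_mul, abs_mul, abs_of_nonneg (Real.rpow_nonneg ht p),
      Real.mul_rpow (Real.rpow_nonneg ht p) (abs_nonneg _), one_div,
      Real.rpow_rpow_inv ht hp']
  refine ⟨hnn, hhom, ?_, ?_⟩
  · -- fblNormP = sup over the unit ball
    refine le_antisymm (iSup_le fun m => iSup_le fun x => iSup_le fun hx => ?_)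
      (iSup₂_le fun x hx => ?_)
    · -- ≤
      set ε : Fin m → ℝ := fun i => if 0 ≤ φ (absRpow p hpn (x i)) then 1 else -1 with hε
      set y : lp (fun _ : A => ℝ) ∞ := ∑ i, ε i • absRpow p hpn (x i) with hy
      have hya : ∀ a, y a = ∑ i, ε i * |x i a| ^ p := by
        intro a
        rw [hy, lp.coeFn_sum, Finset.sum_apply]
        refine Finset.sum_congr rfl fun i _ => ?_
        rw [lp.coeFn_smul, Pi.smul_apply, smul_eq_mul, absRpow_apply]
      have hεabs : ∀ i, |ε i| = 1 := by
        intro i; rw [hε]; dsimp only; split <;> simp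
      have hynorm : ‖y‖ ≤ 1 := by
        apply lp.norm_le_of_forall_le zero_le_one
        intro a
        rw [Real.norm_eq_abs, hya a]
        calc |∑ i, ε i * |x i a| ^ p| ≤ ∑ i, |ε i * |x i a| ^ p| :=
              Finset.abs_sum_le_sum_abs _ _
          _ = ∑ i, |x i a| ^ p := by
              refine Finset.sum_congr rfl fun i _ => ?_
              rw [abs_mul, hεabs i, one_mul, abs_of_nonneg (Real.rpow_nonneg (abs_nonneg _) _)]
          _ ≤ 1 := hx a
      have hphiy : φ y = ∑ i, |φ (absRpow p hpn (x i))| := by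
        rw [hy, map_sum]
        refine Finset.sum_congr rfl fun i _ => ?_
        rw [map_smul, smul_eq_mul, hε]
        dsimp only
        split
        · next h => rw [one_mul, abs_of_nonneg h]
        · next h => rw [abs_of_neg (not_le.1 h), neg_one_mul]
      have h0 : 0 ≤ φ y := by
        rw [hphiy]; positivity
      have hsum : (∑ i, |gPhi p hpn φ (x i)| ^ p) = |φ y| := by
        rw [abs_of_nonneg h0, hphiy]
        exact Finset.sum_congr rfl fun i _ => hgp (x i)
      rw [hsum]
      exact le_iSup₂_of_le y hynorm le_rfl
    · -- ≥
      have hbd : ∀ a, |x a| ≤ ‖x‖ := fun a => by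
        simpa using lp.norm_apply_le_norm (p := ∞) (by norm_num) x a
      set xp : lp (fun _ : A => ℝ) ∞ := mkLinf (fun a => max (x a) 0) ‖x‖ (fun a => by
        rw [abs_of_nonneg (le_max_right _ _)]
        exact max_le ((le_abs_self _).trans (hbd a)) (norm_nonneg x)) with hxp
      set xn : lp (fun _ : A => ℝ) ∞ := mkLinf (fun a => max (-x a) 0) ‖x‖ (fun a => by
        rw [abs_of_nonneg (le_max_right _ _)]
        exact max_le ((neg_le_abs _).trans (hbd a)) (norm_nonneg x)) with hxn
      set v : Fin 2 → lp (fun _ : A => ℝ) ∞ :=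
        ![absRpow (1/p) hq xp, absRpow (1/p) hq xn] with hv
      have hv0 : ∀ a, |v 0 a| ^ p = max (x a) 0 := by
        intro a
        have : v 0 a = |max (x a) 0| ^ (1/p) := rfl
        rw [this, abs_of_nonneg (Real.rpow_nonneg (abs_nonneg _) _), one_div,
          Real.rpow_inv_rpow (abs_nonneg _) hp', abs_of_nonneg (le_max_right _ _)]
      have hv1 : ∀ a, |v 1 a| ^ p = max (-x a) 0 := by
        intro a
        have : v 1 a = |max (-x a) 0| ^ (1/p) := rfl
        rw [this, abs_of_nonneg (Real.rpow_nonneg (abs_nonneg _) _), one_div,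
          Real.rpow_inv_rpow (abs_nonneg _) hp', abs_of_nonneg (le_max_right _ _)]
      have hcond : ∀ a : A, ∑ i, |v i a| ^ p ≤ 1 := by
        intro a
        rw [Fin.sum_univ_two, hv0 a, hv1 a, max_zero_add_max_neg_zero_eq_abs_self]
        exact (hbd a).trans hx
      have habs0 : absRpow p hpn (v 0) = xp := by
        apply lp.ext; funext a
        show |v 0 a| ^ p = xp a
        rw [hv0 a]; rfl
      have habs1 : absRpow p hpn (v 1) = xn := by
        apply lp.ext; funext a
        show |v 1 a| ^ p = xn a
        rw [hv1 a]; rfl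
      have hxsub : xp - xn = x := by
        apply lp.ext; funext a
        rw [lp.coeFn_sub, Pi.sub_apply]
        show max (x a) 0 - max (-x a) 0 = x a
        exact max_zero_sub_max_neg_zero_eq_self _
      have hkey : |φ x| ≤ ∑ i, |gPhi p hpn φ (v i)| ^ p := by
        rw [Fin.sum_univ_two, hgp (v 0), hgp (v 1), habs0, habs1]
        calc |φ x| = |φ xp - φ xn| := by rw [← map_sub, hxsub]
          _ ≤ |φ xp| + |φ xn| := abs_sub _ _
      refine le_iSup_of_le 2 (le_iSup_of_le v (le_iSup_of_le hcond ?_))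
      exact ENNReal.ofReal_le_ofReal (Real.rpow_le_rpow (abs_nonneg _) hkey hq)
  · -- sup over the unit ball = ‖φ‖^{1/p}
    refine le_antisymm (iSup₂_le fun x hx => ?_) ?_
    · refine ENNReal.ofReal_le_ofReal (Real.rpow_le_rpow (abs_nonneg _) ?_ hq)
      calc |φ x| = ‖φ x‖ := (Real.norm_eq_abs _).symm
        _ ≤ ‖φ‖ * ‖x‖ := φ.le_opNorm x
        _ ≤ ‖φ‖ * 1 := by gcongr
        _ = ‖φ‖ := mul_one _
    · rw [le_iSup_iff]
      intro b hb
      rcases eq_or_ne b ⊤ with rfl | hbt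
      · exact le_top
      set c := b.toReal with hc
      have hbc : b = ENNReal.ofReal c := (ENNReal.ofReal_toReal hbt).symm
      have hc0 : 0 ≤ c := ENNReal.toReal_nonneg
      have key : ∀ x : lp (fun _ : A => ℝ) ∞, ‖x‖ ≤ 1 → |φ x| ≤ c ^ p := by
        intro x hx
        have h1 : ENNReal.ofReal (|φ x| ^ (1/p)) ≤ ENNReal.ofReal c := by
          rw [← hbc]
          exact le_trans
            (le_iSup (fun _ : ‖x‖ ≤ 1 => ENNReal.ofReal (|φ x| ^ (1/p))) hx) (hb x)
        have h2 : |φ x| ^ (1/p) ≤ c := (ENNReal.ofReal_le_ofReal_iff hc0).1 h1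
        have h3 := Real.rpow_le_rpow (Real.rpow_nonneg (abs_nonneg _) _) h2 hpn
        rwa [one_div, Real.rpow_inv_rpow (abs_nonneg _) hp'] at h3
      have hφle : ‖φ‖ ≤ c ^ p := by
        refine φ.opNorm_le_bound (by positivity) fun x => ?_
        rcases eq_or_ne x 0 with rfl | hx0
        · rw [map_zero, norm_zero, norm_zero, mul_zero]
        · have hn : (0:ℝ) < ‖x‖ := norm_pos_iff.2 hx0
          have h1 : ‖(‖x‖⁻¹ • x : lp (fun _ : A => ℝ) ∞)‖ ≤ 1 := by
            rw [norm_smul, norm_inv, norm_norm, inv_mul_cancel₀ hn.ne']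
          have h2 := key _ h1
          rw [map_smul, smul_eq_mul, abs_mul, abs_of_nonneg (inv_nonneg.2 hn.le)] at h2
          rw [Real.norm_eq_abs]
          calc |φ x| = ‖x‖ * (‖x‖⁻¹ * |φ x|) := by field_simp
            _ ≤ ‖x‖ * c ^ p := by gcongr
            _ = c ^ p * ‖x‖ := mul_comm _ _
      rw [hbc]
      refine ENNReal.ofReal_le_ofReal ?_
      calc ‖φ‖ ^ (1/p) ≤ (c ^ p) ^ (1/p) := Real.rpow_le_rpow (norm_nonneg _) hφle hq
        _ = c := by rw [one_div, Real.rpow_rpow_inv hc0 hp']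
end

section
/- Let A be a nonempty set, 1 ≤ p < ∞, let h : A → ℝ be absolutely summable (Σ_{a∈A} |h(a)| < ∞), and let S ⊆ A be a finite subset. Define g, f_S : ℓ∞(A) → ℝ by g(x) := |Σ_{a∈A} h(a)·|x(a)|^p|^{1/p} and f_S(x) := |Σ_{a∈S} h(a)·|x(a)|^p|^{1/p}. Then ‖g − f_S‖_{FBL^p} ≤ (Σ_{a∈A∖S} |h(a)|)^{1/p}. In particular, g can be approximated in the ‖·‖_{FBL^p}-norm by the functions f_S over finite S, so g belongs to the free p-convex Banach lattice FBL^(p)[ℓ₁(A)]. -/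
open scoped ENNReal

/-!
Since `t ↦ t ^ (1/p)` is subadditive on `[0, ∞)`, `|g x - f_S x| ^ p` is at most
`|Σ_{a∉S} h(a)|x(a)|^p| ≤ Σ_{a∉S} |h(a)| |x(a)|^p`. Summing this over a family `x₁, …, xₘ`
with `Σᵢ |xᵢ(a)|^p ≤ 1` for every `a` and exchanging the sums bounds `Σᵢ |g xᵢ - f_S xᵢ|^p`
by `Σ_{a∉S} |h(a)|`. The tails of the absolutely convergent series `Σ |h(a)|` tend to zero.
-/

local notation "ℓ∞(" A ")" => lp (fun _ : A => ℝ) ∞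

lemma Real.rpow_sub_rpow_le_sub_rpow {q a b : ℝ} (hq0 : 0 ≤ q) (hq1 : q ≤ 1) (hb : 0 ≤ b)
    (hba : b ≤ a) : a ^ q - b ^ q ≤ (a - b) ^ q := by
  have := Real.rpow_add_le_add_rpow (sub_nonneg.2 hba) hb hq0 hq1
  rw [sub_add_cancel] at this
  linarith

lemma Real.abs_abs_rpow_sub_abs_rpow_le {q : ℝ} (hq0 : 0 ≤ q) (hq1 : q ≤ 1) (a b : ℝ) :
    |(|a| ^ q - |b| ^ q)| ≤ |a - b| ^ q := by
  wlog hba : |b| ≤ |a| generalizing a b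
  · rw [abs_sub_comm, abs_sub_comm a]
    exact this b a (le_of_not_ge hba)
  rw [abs_of_nonneg (sub_nonneg.2 (Real.rpow_le_rpow (abs_nonneg b) hba hq0))]
  exact (Real.rpow_sub_rpow_le_sub_rpow hq0 hq1 (abs_nonneg b) hba).trans
    (Real.rpow_le_rpow (sub_nonneg.2 hba) (abs_sub_abs_le_abs_sub a b) hq0)

lemma norm_tsum_sub_sum_le_tsum_compl {ι E : Type*} [NormedAddCommGroup E] [CompleteSpace E]
    {f : ι → E} (hf : Summable fun i => ‖f i‖) (S : Finset ι) :
    ‖∑' i, f i - ∑ i ∈ S, f i‖ ≤ ∑' i : {i // i ∉ S}, ‖f i‖ := by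
  rw [← hf.of_norm.sum_add_tsum_subtype_compl S, add_sub_cancel_left]
  exact norm_tsum_le_tsum_norm (hf.subtype _)

section FBLNorm

variable {A : Type*} {p : ℝ}

lemma abs_apply_rpow_le_norm_rpow (hp : 0 ≤ p) (x : ℓ∞(A)) (a : A) : |x a| ^ p ≤ ‖x‖ ^ p :=
  Real.rpow_le_rpow (abs_nonneg _) (lp.norm_apply_le_norm ENNReal.top_ne_zero x a) hp

lemma summable_mul_abs_rpow (hp : 0 ≤ p) {w : A → ℝ} (hw0 : ∀ a, 0 ≤ w a) (hw : Summable w)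
    (x : ℓ∞(A)) : Summable fun a => w a * |x a| ^ p :=
  (hw.mul_right (‖x‖ ^ p)).of_nonneg_of_le (fun a => mul_nonneg (hw0 a) (by positivity))
    fun a => mul_le_mul_of_nonneg_left (abs_apply_rpow_le_norm_rpow hp x a) (hw0 a)

lemma abs_sub_rpow_le_tsum_compl (hp : 1 ≤ p) {h : A → ℝ}
    (hsum : Summable fun a => |h a|) (S : Finset A) (x : ℓ∞(A)) :
    |(|∑' a, h a * |x a| ^ p| ^ (1 / p) - |∑ a ∈ S, h a * |x a| ^ p| ^ (1 / p))| ^ p ≤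
      ∑' a : {a // a ∉ S}, |h a| * |x a| ^ p := by
  have hp0 : 0 < p := zero_lt_one.trans_le hp
  have habs : ∀ a, |h a * |x a| ^ p| = |h a| * |x a| ^ p := fun a => by
    rw [abs_mul, abs_of_nonneg (Real.rpow_nonneg (abs_nonneg _) p)]
  have hsummable : Summable fun a => ‖h a * |x a| ^ p‖ := by
    simpa only [Real.norm_eq_abs, habs] using
      summable_mul_abs_rpow hp0.le (fun a => abs_nonneg (h a)) hsum x
  calc _ ≤ (|∑' a, h a * |x a| ^ p - ∑ a ∈ S, h a * |x a| ^ p| ^ (1 / p)) ^ p :=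
        Real.rpow_le_rpow (abs_nonneg _) (Real.abs_abs_rpow_sub_abs_rpow_le (by positivity)
          ((div_le_one hp0).2 hp) _ _) hp0.le
    _ = |∑' a, h a * |x a| ^ p - ∑ a ∈ S, h a * |x a| ^ p| := by
        rw [← Real.rpow_mul (abs_nonneg _), one_div_mul_cancel hp0.ne', Real.rpow_one]
    _ ≤ _ := by
        simpa only [Real.norm_eq_abs, habs] using norm_tsum_sub_sum_le_tsum_compl hsummable S

lemma fblNormP_le_of_rpow_le_tsum (hp : 0 ≤ p) {w : A → ℝ} (hw0 : ∀ a, 0 ≤ w a)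
    (hw : Summable w) (s : Set A) {f : ℓ∞(A) → ℝ}
    (hf : ∀ x, |f x| ^ p ≤ ∑' a : s, w a * |x a| ^ p) :
    fblNormP A p f ≤ ENNReal.ofReal ((∑' a : s, w a) ^ (1 / p)) := by
  refine iSup_le fun m => iSup_le fun x => iSup_le fun hx => ENNReal.ofReal_le_ofReal ?_
  have hsummable : ∀ i, Summable fun a : s => w a * |x i a| ^ p := fun i =>
    (summable_mul_abs_rpow hp hw0 hw (x i)).subtype s
  refine Real.rpow_le_rpow (by positivity) ?_ (by positivity)
  calc ∑ i, |f (x i)| ^ p ≤ ∑ i, ∑' a : s, w a * |x i a| ^ p :=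
        Finset.sum_le_sum fun i _ => hf (x i)
    _ = ∑' a : s, w a * ∑ i, |x i a| ^ p := by
        simp only [Finset.mul_sum]
        exact (Summable.tsum_finsetSum fun i _ => hsummable i).symm
    _ ≤ ∑' a : s, w a :=
        ((summable_sum fun i _ => hsummable i).congr fun a => (Finset.mul_sum _ _ _).symm
          ).tsum_le_tsum (fun a => mul_le_of_le_one_right (hw0 a) (hx a)) (hw.subtype s)

end FBLNorm

theorem gPhi_countable_sum_approx_general
    (A : Type*) (p : ℝ) (hp : 1 ≤ p)
    (h : A → ℝ) (hsum : Summable fun a => |h a|)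
    (g : lp (fun _ : A => ℝ) ∞ → ℝ)
    (hg : ∀ x : lp (fun _ : A => ℝ) ∞, g x = |∑' a : A, h a * |x a| ^ p| ^ (1 / p))
    (fS : Finset A → lp (fun _ : A => ℝ) ∞ → ℝ)
    (hfS : ∀ (S : Finset A) (x : lp (fun _ : A => ℝ) ∞),
      fS S x = |∑ a ∈ S, h a * |x a| ^ p| ^ (1 / p)) :
    (∀ S : Finset A,
      fblNormP A p (fun x => g x - fS S x) ≤
        ENNReal.ofReal ((∑' a : {a : A // a ∉ S}, |h a.1|) ^ (1 / p))) ∧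
    ∀ ε : ℝ, 0 < ε → ∃ S : Finset A,
      fblNormP A p (fun x => g x - fS S x) ≤ ENNReal.ofReal ε := by
  have hp0 : 0 < p := zero_lt_one.trans_le hp
  have tail_bound : ∀ S : Finset A, fblNormP A p (fun x => g x - fS S x) ≤
      ENNReal.ofReal ((∑' a : {a : A // a ∉ S}, |h a.1|) ^ (1 / p)) := fun S =>
    fblNormP_le_of_rpow_le_tsum hp0.le (fun a => abs_nonneg (h a)) hsum {a | a ∉ S} fun x => by
      rw [hg, hfS]
      exact abs_sub_rpow_le_tsum_compl hp hsum S x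
  refine ⟨tail_bound, fun ε hε => ?_⟩
  obtain ⟨S, hS⟩ := ((tendsto_order.1 (tendsto_tsum_compl_atTop_zero fun a => |h a|)).2 _
    (Real.rpow_pos_of_pos hε p)).exists
  refine ⟨S, (tail_bound S).trans (ENNReal.ofReal_le_ofReal ?_)⟩
  calc (∑' a : {a : A // a ∉ S}, |h a.1|) ^ (1 / p) ≤ (ε ^ p) ^ (1 / p) :=
        Real.rpow_le_rpow (tsum_nonneg fun a => abs_nonneg _) hS.le (by positivity)
    _ = ε := by rw [← Real.rpow_mul hε.le, mul_one_div_cancel hp0.ne', Real.rpow_one]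

/-- **Lemma.** For an absolutely summable `h : A → ℝ` and a finite `S ⊆ A`, the functions
`g(x) = |Σ_{a∈A} h(a)|x(a)|^p|^{1/p}` and `f_S(x) = |Σ_{a∈S} h(a)|x(a)|^p|^{1/p}` on `ℓ∞(A)`
satisfy `‖g − f_S‖_{FBL^p} ≤ (Σ_{a∈A∖S} |h(a)|)^{1/p}`; in particular, `g` is approximated
in the `FBL^p`-norm by the functions `f_S` over finite sets `S`. -/
theorem gPhi_countable_sum_approx
    (A : Type*) [Nonempty A] (p : ℝ) (hp : 1 ≤ p)
    (h : A → ℝ) (hsum : Summable fun a => |h a|)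
    (g : lp (fun _ : A => ℝ) ∞ → ℝ)
    (hg : ∀ x : lp (fun _ : A => ℝ) ∞, g x = |∑' a : A, h a * |x a| ^ p| ^ (1 / p))
    (fS : Finset A → lp (fun _ : A => ℝ) ∞ → ℝ)
    (hfS : ∀ (S : Finset A) (x : lp (fun _ : A => ℝ) ∞),
      fS S x = |∑ a ∈ S, h a * |x a| ^ p| ^ (1 / p)) :
    (∀ S : Finset A,
      fblNormP A p (fun x => g x - fS S x) ≤
        ENNReal.ofReal ((∑' a : {a : A // a ∉ S}, |h a.1|) ^ (1 / p))) ∧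
    ∀ ε : ℝ, 0 < ε → ∃ S : Finset A,
      fblNormP A p (fun x => g x - fS S x) ≤ ENNReal.ofReal ε :=
  gPhi_countable_sum_approx_general A p hp h hsum g hg fS hfS
end
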